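/- arXiv:1001.0358 — 2 statements merged into one kernel-verified Lean document; each statement's English description precedes it below -/
import Mathlib

section
/- If Y ⊆ ℝⁿ is locally compact and locally contractible, then Y is a Euclidean neighborhood retract: there exists a set U ⊆ ℝⁿ that is a neighborhood of Y in ℝⁿ and a continuous retraction r : U → Y, i.e. a continuous map with r(y) = y for all y ∈ Y. -/
open CategoryTheory

/-- The singular chain complex of a topological space, with `ℤ` coefficients:
the alternating face map complex of the free simplicial abelian group on the
singular simplicial set. -/
noncomputable def singularChainComplex : TopCat.{0} ⥤ ChainComplex AddCommGrpCat.{0} ℕ :=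
  TopCat.toSSet ⋙ ((SimplicialObject.whiskering _ _).obj AddCommGrpCat.free) ⋙
    (AlgebraicTopology.alternatingFaceMapComplex _)

/-- Singular homology with integer coefficients, indexed by `q : ℤ`
(it vanishes in negative degrees): the `ℕ`-indexed singular chain complex is
extended to a `ℤ`-indexed (cohomologically graded) complex, where the chain
degree `q` sits in cohomological degree `-q`. -/
noncomputable def singularHomology (q : ℤ) : TopCat.{0} ⥤ AddCommGrpCat.{0} :=
  singularChainComplex ⋙
    (ComplexShape.embeddingDownNat.extendFunctor AddCommGrpCat) ⋙
    HomologicalComplex.homologyFunctor _ _ (-q)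

/-- `V` is contractible within `U`: the inclusion `V ↪ U` is homotopic, as a map
of subspaces, to a constant map. -/
def ContractibleIn {Y : Type*} [TopologicalSpace Y] (V U : Set Y) : Prop :=
  ∃ (h : V ⊆ U) (p : U),
    ContinuousMap.Homotopic ⟨Set.inclusion h, continuous_inclusion h⟩
      (ContinuousMap.const V p)

/-- A space is locally contractible if every neighborhood of a point contains a
neighborhood that is contractible within it. -/
def LocallyContractible (Y : Type*) [TopologicalSpace Y] : Prop :=
  ∀ x : Y, ∀ U ∈ nhds x, ∃ V ∈ nhds x, V ⊆ U ∧ ContractibleIn V U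

/-!
Cover `ℝⁿ \ closure Y` by dyadic Whitney cubes, whose size is comparable to their distance
from `Y`; in dimension `n` at most `4 * 5 ^ n` of them lie near any point. Send each cube to a
nearby point of `Y` and extend over the simplices of the nerve one dimension at a time, choosing
on each simplex an extension whose image has almost minimal radius. Local contractibility,
applied at most `4 * 5 ^ n` times, shows that near `y ∈ Y` all simplices spanned by small nearby
cubes get such an extension, with image close to `y`. Composing with the partition of unity
subordinate to the cubes gives a retraction defined on `Y` together with the points whose nearby
cubes all span extended simplices; local compactness makes `Y` locally closed, so this set is a
neighborhood of `Y`.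
-/

namespace ENR

open Metric Set Filter Topology

section Simplex

variable {ι : Type*}

def simplex (σ : Finset ι) : Set (ι → ℝ) :=
  {b | (∀ i, 0 ≤ b i) ∧ (∀ i ∉ σ, b i = 0) ∧ ∑ i ∈ σ, b i = 1}

def simplexBoundary (σ : Finset ι) : Set (ι → ℝ) :=
  {b | b ∈ simplex σ ∧ ∃ i ∈ σ, b i = 0}

open scoped Classical in
noncomputable def carrier (σ : Finset ι) (b : ι → ℝ) : Finset ι := {i ∈ σ | b i ≠ 0}

theorem simplex_mono {τ σ : Finset ι} (h : τ ⊆ σ) : simplex τ ⊆ simplex σ := by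
  rintro b ⟨hnonneg, hzero, hsum⟩
  refine ⟨hnonneg, fun i hi => hzero i fun hiτ => hi (h hiτ), ?_⟩
  rwa [← Finset.sum_subset h fun i _ hiτ => hzero i hiτ]

theorem simplex_subset_simplexBoundary {τ σ : Finset ι} (h : τ ⊂ σ) :
    simplex τ ⊆ simplexBoundary σ := by
  intro b hb
  obtain ⟨i, hiσ, hiτ⟩ := Finset.exists_of_ssubset h
  exact ⟨simplex_mono h.subset hb, i, hiσ, hb.2.1 i hiτ⟩

theorem nonempty_of_mem_simplex {σ : Finset ι} {b : ι → ℝ} (hb : b ∈ simplex σ) :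
    σ.Nonempty := by
  rw [Finset.nonempty_iff_ne_empty]
  rintro rfl
  simpa using hb.2.2

theorem single_mem_simplex [DecidableEq ι] (i : ι) : Pi.single i 1 ∈ simplex {i} := by
  refine ⟨fun j => ?_, fun j hj => Pi.single_eq_of_ne (Finset.notMem_singleton.1 hj) _, by simp⟩
  by_cases h : j = i <;> simp [h]

theorem isClosed_simplex (σ : Finset ι) : IsClosed (simplex σ) := by
  simp only [simplex, ofPred_and, ofPred_forall]
  exact (isClosed_iInter fun i => isClosed_le continuous_const (continuous_apply i)).inter
    ((isClosed_iInter fun i => isClosed_iInter fun _ => isClosed_eq (continuous_apply i)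
      continuous_const).inter (isClosed_eq (continuous_finsetSum _ fun i _ => continuous_apply i)
        continuous_const))

theorem isCompact_simplex (σ : Finset ι) : IsCompact (simplex σ) := by
  refine (isCompact_univ_pi fun _ => isCompact_Icc (a := (0 : ℝ)) (b := 1)).of_isClosed_subset
    (isClosed_simplex σ) ?_
  rintro b ⟨hnonneg, hzero, hsum⟩ i -
  refine ⟨hnonneg i, ?_⟩
  by_cases hi : i ∈ σ
  · exact hsum ▸ Finset.single_le_sum (fun j _ => hnonneg j) hi
  · simp [hzero i hi]

theorem isCompact_simplexBoundary (σ : Finset ι) : IsCompact (simplexBoundary σ) := by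
  refine (isCompact_simplex σ).of_isClosed_subset ?_ fun _ hb => hb.1
  have : simplexBoundary σ = simplex σ ∩ ⋃ i ∈ σ, {b | b i = 0} := by
    ext b; simp [simplexBoundary]
  rw [this]
  exact (isClosed_simplex σ).inter (isClosed_biUnion_finset fun i _ =>
    isClosed_eq (continuous_apply i) continuous_const)

theorem mem_carrier {σ : Finset ι} {b : ι → ℝ} {i : ι} :
    i ∈ carrier σ b ↔ i ∈ σ ∧ b i ≠ 0 :=
  Finset.mem_filter

theorem carrier_subset (σ : Finset ι) (b : ι → ℝ) : carrier σ b ⊆ σ :=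
  Finset.filter_subset _ _

theorem carrier_subset_of_mem_simplex (σ : Finset ι) {τ : Finset ι} {b : ι → ℝ}
    (hb : b ∈ simplex τ) : carrier σ b ⊆ τ :=
  fun i hi => by_contra fun hiτ => (mem_carrier.1 hi).2 (hb.2.1 i hiτ)

theorem mem_simplex_carrier {σ : Finset ι} {b : ι → ℝ} (hb : b ∈ simplex σ) :
    b ∈ simplex (carrier σ b) := by
  refine ⟨hb.1, fun i hi => ?_, ?_⟩
  · by_contra hne
    by_cases hiσ : i ∈ σ
    · exact hi (mem_carrier.2 ⟨hiσ, hne⟩)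
    · exact hne (hb.2.1 i hiσ)
  · rw [carrier, Finset.sum_filter_ne_zero]
    exact hb.2.2

theorem carrier_ssubset {σ : Finset ι} {b : ι → ℝ} (hb : b ∈ simplexBoundary σ) :
    carrier σ b ⊂ σ := by
  obtain ⟨-, i, hi, hbi⟩ := hb
  exact Finset.ssubset_iff_subset_ne.2 ⟨carrier_subset σ b, fun h =>
    (mem_carrier.1 (h.symm ▸ hi : i ∈ carrier σ b)).2 hbi⟩

end Simplex

theorem continuous_coneMap {X K Z : Type*} [TopologicalSpace X] [TopologicalSpace K]
    [CompactSpace K] [TopologicalSpace Z] (H : C(unitInterval × K, Z)) {p : Z}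
    (hH : ∀ k, H (1, k) = p) {μ : X → unitInterval} (hμ : Continuous μ)
    (π : C({x | μ x < 1}, K)) :
    Continuous fun x => if h : μ x < 1 then H (μ x, π ⟨x, h⟩) else p := by
  refine continuous_iff_continuousAt.2 fun x => ?_
  by_cases hx : μ x < 1
  · refine ContinuousOn.continuousAt ?_ ((isOpen_lt hμ continuous_const).mem_nhds hx)
    rw [continuousOn_iff_continuous_domRestrict]
    convert H.continuous.comp ((hμ.comp continuous_subtype_val).prodMk π.continuous) using 1
    funext y
    exact dif_pos y.2
  · have hx1 : μ x = 1 := le_antisymm unitInterval.le_one' (not_lt.1 hx)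
    refine tendsto_nhds.2 fun W hW hpW => ?_
    simp only [dif_neg hx] at hpW
    -- near the cone point, `H` is uniformly close to `p` by compactness of `K`
    have hnear : ∀ᶠ t in 𝓝 (1 : unitInterval), ∀ k ∈ (univ : Set K), H (t, k) ∈ W :=
      isCompact_univ.eventually_forall_of_forall_eventually fun k _ =>
        H.continuous.continuousAt.preimage_mem_nhds (hW.mem_nhds (by rwa [hH]))
    filter_upwards [hμ.continuousAt.eventually (hx1 ▸ hnear)] with y hy
    simp only [mem_preimage]
    split_ifs
    exacts [hy _ trivial, hpW]

section Cone

variable {ι : Type*} {σ : Finset ι} (hσ : σ.Nonempty)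

/-- Coordinates on the simplex seen as the cone over its boundary with apex the barycenter `c`:
`b = coneHeight b • c + (1 - coneHeight b) • coneBase b`. -/
noncomputable def coneHeight (b : ι → ℝ) : ℝ := σ.card * σ.inf' hσ b

open scoped Classical in
noncomputable def coneBase (b : ι → ℝ) : ι → ℝ :=
  fun i => if i ∈ σ then (b i - σ.inf' hσ b) / (1 - coneHeight hσ b) else 0

variable {hσ}

theorem continuous_coneHeight : Continuous (coneHeight hσ) :=
  continuous_const.mul (Continuous.finset_inf'_apply hσ fun i _ => continuous_apply i)

theorem coneHeight_mem_unitInterval {b : ι → ℝ} (hb : b ∈ simplex σ) :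
    coneHeight hσ b ∈ unitInterval := by
  obtain ⟨i, hi, hmin⟩ := Finset.exists_mem_eq_inf' hσ b
  refine ⟨mul_nonneg (Nat.cast_nonneg _) (hmin ▸ hb.1 i), ?_⟩
  have := Finset.card_nsmul_le_sum σ b (σ.inf' hσ b) fun j hj => Finset.inf'_le b hj
  rwa [nsmul_eq_mul, hb.2.2] at this

theorem coneHeight_eq_zero {b : ι → ℝ} (hb : b ∈ simplexBoundary σ) :
    coneHeight hσ b = 0 := by
  obtain ⟨hbσ, i, hi, hbi⟩ := hb
  obtain ⟨j, -, hmin⟩ := Finset.exists_mem_eq_inf' hσ b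
  have : σ.inf' hσ b = 0 := le_antisymm (hbi ▸ Finset.inf'_le b hi) (hmin ▸ hbσ.1 j)
  simp [coneHeight, this]

theorem coneBase_mem {b : ι → ℝ} (hb : b ∈ simplex σ) (h : coneHeight hσ b < 1) :
    coneBase hσ b ∈ simplexBoundary σ := by
  have hpos : 0 < 1 - coneHeight hσ b := sub_pos.2 h
  obtain ⟨i, hi, hmin⟩ := Finset.exists_mem_eq_inf' hσ b
  refine ⟨⟨fun j => ?_, fun j hj => if_neg hj, ?_⟩, i, hi, by simp [coneBase, hi, ← hmin]⟩
  · unfold coneBase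
    split_ifs with hj
    exacts [div_nonneg (sub_nonneg.2 (Finset.inf'_le b hj)) hpos.le, le_rfl]
  · simp only [coneBase]
    rw [Finset.sum_congr rfl fun j hj => if_pos hj, ← Finset.sum_div, Finset.sum_sub_distrib,
      hb.2.2, Finset.sum_const, nsmul_eq_mul, div_eq_one_iff_eq hpos.ne', coneHeight]

theorem coneBase_eq_self {b : ι → ℝ} (hb : b ∈ simplexBoundary σ) : coneBase hσ b = b := by
  have h0 := coneHeight_eq_zero (hσ := hσ) hb
  have hmin : σ.inf' hσ b = 0 := by
    simpa [coneHeight, Finset.card_ne_zero.2 hσ] using h0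
  funext i
  unfold coneBase
  split_ifs with hi
  · simp [hmin, h0]
  · exact (hb.1.2.1 i hi).symm

theorem continuousOn_coneBase : ContinuousOn (coneBase hσ) {b | coneHeight hσ b < 1} := by
  refine continuousOn_pi.2 fun i => ?_
  unfold coneBase
  split_ifs
  · exact ((continuous_apply i).sub (Continuous.finset_inf'_apply hσ fun j _ =>
      continuous_apply j)).continuousOn.div
        (continuous_const.sub continuous_coneHeight).continuousOn fun b hb => (sub_pos.2 hb).ne'
  · exact continuousOn_const

end Cone

theorem _root_.ContractibleIn.exists_simplex_extension {ι Z : Type*} [TopologicalSpace Z]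
    {V U : Set Z} (hVU : ContractibleIn V U) {σ : Finset ι} (hσ : σ.Nonempty)
    (f : C(simplexBoundary σ, Z)) (hf : ∀ b, f b ∈ V) :
    ∃ F : C(simplex σ, Z),
      (∀ b (hb : b ∈ simplexBoundary σ), F ⟨b, hb.1⟩ = f ⟨b, hb⟩) ∧
        ∀ b, F b ∈ U := by
  obtain ⟨hVU, p, ⟨H⟩⟩ := hVU
  have : CompactSpace (simplexBoundary σ) :=
    isCompact_iff_compactSpace.1 (isCompact_simplexBoundary σ)
  let G : C(unitInterval × simplexBoundary σ, Z) :=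
    ⟨fun x => H (x.1, ⟨f x.2, hf x.2⟩), continuous_subtype_val.comp (H.continuous.comp
      (continuous_fst.prodMk ((f.continuous.comp continuous_snd).subtype_mk _)))⟩
  let μ (b : simplex σ) : unitInterval := ⟨coneHeight hσ b, coneHeight_mem_unitInterval b.2⟩
  have hμ : Continuous μ := (continuous_coneHeight.comp continuous_subtype_val).subtype_mk _
  let π : C({b | μ b < 1}, simplexBoundary σ) :=
    ⟨fun b => ⟨coneBase hσ b, coneBase_mem b.1.2 b.2⟩, (continuousOn_coneBase.comp_continuous
      (continuous_subtype_val.comp continuous_subtype_val) fun b => b.2).subtype_mk _⟩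
  refine ⟨⟨_, continuous_coneMap G (p := p) (fun k => by simp [G]) hμ π⟩, fun b hb => ?_,
    fun b => ?_⟩
  · have h0 : μ ⟨b, hb.1⟩ = 0 := Subtype.ext (coneHeight_eq_zero hb)
    have hπ : coneBase hσ b = b := coneBase_eq_self hb
    simp [h0, G, π, hπ]
  · dsimp only [ContinuousMap.coe_mk]
    split_ifs
    exacts [(H _).2, p.2]

theorem _root_.LocallyContractible.exists_simplex_extension_near {ι Z : Type*} [MetricSpace Z]
    (hZ : LocallyContractible Z) (z₀ : Z) {ε : ℝ} (hε : 0 < ε) :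
    ∃ δ > 0, ∀ σ : Finset ι, σ.Nonempty → ∀ f : C(simplexBoundary σ, Z),
      (∀ b, dist (f b) z₀ < δ) → ∃ F : C(simplex σ, Z),
        (∀ b (hb : b ∈ simplexBoundary σ), F ⟨b, hb.1⟩ = f ⟨b, hb⟩) ∧
          ∀ b, dist (F b) z₀ < ε := by
  obtain ⟨V, hV, -, hVU⟩ := hZ z₀ (ball z₀ ε) (ball_mem_nhds z₀ hε)
  obtain ⟨δ, hδ, hδV⟩ := Metric.mem_nhds_iff.1 hV
  exact ⟨δ, hδ, fun σ hσ f hf => hVU.exists_simplex_extension hσ f fun b => hδV (hf b)⟩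

section Nerve

variable {ι Z : Type*} [MetricSpace Z] (v : ι → Z) (w : ι → ℝ)

def ExtendsFaces (σ : Finset ι) (prev : ∀ τ ⊂ σ, Option C(simplex τ, Z))
    (F : C(simplex σ, Z)) : Prop :=
  ∀ τ (hτσ : τ ⊂ σ), τ.Nonempty → ∃ g ∈ prev τ hτσ,
    ∀ b (hb : b ∈ simplex τ), F ⟨b, simplex_mono hτσ.subset hb⟩ = g ⟨b, hb⟩

def extensionRadii (σ : Finset ι) (prev : ∀ τ ⊂ σ, Option C(simplex τ, Z)) : Set ℝ :=
  {r | 0 ≤ r ∧ ∃ (F : C(simplex σ, Z)) (z : Z),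
    ExtendsFaces σ prev F ∧ ∀ b, dist (F b) z ≤ r}

open scoped Classical in
/-- Vertices go to `v`; on a larger simplex we pick, among the extensions of the maps chosen on
its faces, one whose image has almost minimal radius. The choice refers to no base point, yet it
keeps the images of small simplices near any point where small extensions exist
(`dist_nerveMap_le`). The slack `∑ i ∈ σ, w i` makes such a choice possible. -/
noncomputable def nerveStep (σ : Finset ι) (prev : ∀ τ ⊂ σ, Option C(simplex τ, Z)) :
    Option C(simplex σ, Z) :=
  if h : ∃ i, σ = {i} then some (ContinuousMap.const _ (v h.choose))
  else if h : ∃ (F : C(simplex σ, Z)) (z : Z) (r : ℝ), ExtendsFaces σ prev F ∧ 0 ≤ r ∧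
      (∀ b, dist (F b) z ≤ r) ∧ r < sInf (extensionRadii σ prev) + ∑ i ∈ σ, w i then
    some h.choose
  else none

noncomputable def nerveExtension : ∀ σ : Finset ι, Option C(simplex σ, Z) :=
  Finset.strongInduction (nerveStep v w)

def NerveExtends (σ : Finset ι) : Prop := (nerveExtension v w σ).isSome

noncomputable def nerveMap {σ : Finset ι} (h : NerveExtends v w σ) : C(simplex σ, Z) :=
  (nerveExtension v w σ).get h

variable {v w}

theorem nerveExtension_eq (σ : Finset ι) :
    nerveExtension v w σ = nerveStep v w σ fun τ _ => nerveExtension v w τ :=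
  Finset.strongInduction_eq _ σ

theorem nerveExtension_singleton (i : ι) :
    nerveExtension v w {i} = some (ContinuousMap.const _ (v i)) := by
  have h : ∃ j, ({i} : Finset ι) = {j} := ⟨i, rfl⟩
  rw [nerveExtension_eq, nerveStep, dif_pos h, Finset.singleton_injective h.choose_spec.symm]

theorem nerveExtends_singleton (i : ι) : NerveExtends v w {i} := by
  simp [NerveExtends, nerveExtension_singleton]

theorem nerveMap_singleton_apply (i : ι) (b : simplex {i}) :
    nerveMap v w (nerveExtends_singleton i) b = v i := by
  simp [nerveMap, nerveExtension_singleton]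

theorem nerveMap_spec {σ : Finset ι} (hσ : ¬∃ i, σ = {i}) (h : NerveExtends v w σ) :
    ExtendsFaces σ (fun τ _ => nerveExtension v w τ) (nerveMap v w h) ∧
      ∃ (z : Z) (r : ℝ), (∀ b, dist (nerveMap v w h b) z ≤ r) ∧
        ∀ (F : C(simplex σ, Z)) (z' : Z) (r' : ℝ),
          ExtendsFaces σ (fun τ _ => nerveExtension v w τ) F → 0 ≤ r' →
            (∀ b, dist (F b) z' ≤ r') → r < r' + ∑ i ∈ σ, w i := by
  have hG := nerveExtension_eq (v := v) (w := w) σ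
  rw [nerveStep, dif_neg hσ] at hG
  split_ifs at hG with hex
  · obtain ⟨z, r, hext, -, hr, hlt⟩ := hex.choose_spec
    have hmap : nerveMap v w h = hex.choose := by simp [nerveMap, hG]
    rw [hmap]
    refine ⟨hext, z, r, hr, fun F z' r' hF hr'0 hr' => hlt.trans_le ?_⟩
    gcongr
    exact csInf_le ⟨0, fun _ hs => hs.1⟩ ⟨hr'0, F, z', hF, hr'⟩
  · simp [NerveExtends, hG] at h

theorem nerveExtends_of_extendsFaces {σ : Finset ι} (hσ : ¬∃ i, σ = {i})
    (hw : 0 < ∑ i ∈ σ, w i) {F : C(simplex σ, Z)} {z : Z} {r : ℝ}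
    (hF : ExtendsFaces σ (fun τ _ => nerveExtension v w τ) F) (hr0 : 0 ≤ r)
    (hr : ∀ b, dist (F b) z ≤ r) : NerveExtends v w σ := by
  have hne : (extensionRadii σ fun τ _ => nerveExtension v w τ).Nonempty :=
    ⟨r, hr0, F, z, hF, hr⟩
  obtain ⟨r', ⟨hr'0, F', z', hF', hr'⟩, hlt⟩ := Real.lt_sInf_add_pos hne hw
  have hex : ∃ (F : C(simplex σ, Z)) (z : Z) (r : ℝ),
      ExtendsFaces σ (fun τ _ => nerveExtension v w τ) F ∧ 0 ≤ r ∧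
        (∀ b, dist (F b) z ≤ r) ∧
          r < sInf (extensionRadii σ fun τ _ => nerveExtension v w τ) + ∑ i ∈ σ, w i :=
    ⟨F', z', r', hF', hr'0, hr', hlt⟩
  rw [NerveExtends, nerveExtension_eq, nerveStep, dif_neg hσ, dif_pos hex]
  rfl

theorem not_exists_singleton_of_ssubset {σ τ : Finset ι} (hτσ : τ ⊂ σ)
    (hτ : τ.Nonempty) : ¬∃ i, σ = {i} := by
  rintro ⟨i, rfl⟩
  exact hτσ.ne (Finset.subset_singleton_iff.1 hτσ.subset |>.resolve_left hτ.ne_empty)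

theorem NerveExtends.mono {σ τ : Finset ι} (h : NerveExtends v w σ) (hτσ : τ ⊆ σ)
    (hτ : τ.Nonempty) : NerveExtends v w τ := by
  rcases hτσ.eq_or_ssubset with rfl | hτσ
  · exact h
  obtain ⟨g, hg, -⟩ :=
    (nerveMap_spec (not_exists_singleton_of_ssubset hτσ hτ) h).1 τ hτσ hτ
  exact Option.isSome_iff_exists.2 ⟨g, hg⟩

theorem nerveMap_apply_of_subset {σ τ : Finset ι} (h : NerveExtends v w σ)
    (hτ : NerveExtends v w τ) (hτσ : τ ⊆ σ) (b : ι → ℝ) (hb : b ∈ simplex τ) :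
    nerveMap v w h ⟨b, simplex_mono hτσ hb⟩ = nerveMap v w hτ ⟨b, hb⟩ := by
  rcases hτσ.eq_or_ssubset with rfl | hτσ
  · rfl
  obtain ⟨g, hg, hFg⟩ := (nerveMap_spec (not_exists_singleton_of_ssubset hτσ
    (nonempty_of_mem_simplex hb)) h).1 τ hτσ (nonempty_of_mem_simplex hb)
  rw [hFg b hb, nerveMap, Option.get_of_mem hτ hg]

theorem exists_nerveMap_boundary {σ : Finset ι}
    (hfaces : ∀ τ ⊂ σ, τ.Nonempty → NerveExtends v w τ) :
    ∃ g : C(simplexBoundary σ, Z), ∀ τ (hτσ : τ ⊂ σ) (hτ : NerveExtends v w τ) b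
      (hb : b ∈ simplex τ),
        g ⟨b, simplex_subset_simplexBoundary hτσ hb⟩ = nerveMap v w hτ ⟨b, hb⟩ := by
  have hcarrier (b : simplexBoundary σ) : NerveExtends v w (carrier σ b) :=
    hfaces _ (carrier_ssubset b.2) (nonempty_of_mem_simplex (mem_simplex_carrier b.2.1))
  let g (b : simplexBoundary σ) : Z := nerveMap v w (hcarrier b) ⟨b, mem_simplex_carrier b.2.1⟩
  have hg τ (hτσ : τ ⊂ σ) (hτ : NerveExtends v w τ) b (hb : b ∈ simplex τ) :
      g ⟨b, simplex_subset_simplexBoundary hτσ hb⟩ = nerveMap v w hτ ⟨b, hb⟩ :=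
    (nerveMap_apply_of_subset hτ _ (carrier_subset_of_mem_simplex σ hb) _ _).symm
  have : Finite {τ // τ ⊂ σ} :=
    (σ.powerset.finite_toSet.subset fun τ (hτ : τ ⊂ σ) =>
      Finset.mem_powerset.2 hτ.subset).to_subtype
  refine ⟨⟨g, (locallyFinite_of_finite fun τ : {τ // τ ⊂ σ} =>
    {b : simplexBoundary σ | (b : ι → ℝ) ∈ simplex τ.1}).continuous ?_ (fun τ =>
      (isClosed_simplex τ.1).preimage continuous_subtype_val) fun τ => ?_⟩, hg⟩
  · exact eq_univ_of_forall fun b => mem_iUnion.2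
      ⟨⟨_, carrier_ssubset b.2⟩, mem_simplex_carrier b.2.1⟩
  · rcases τ.1.eq_empty_or_nonempty with hτ | hτ
    · simp [hτ, simplex]
    rw [continuousOn_iff_continuous_domRestrict]
    convert (nerveMap v w (hfaces _ τ.2 hτ)).continuous.comp (f := fun b :
      {b : simplexBoundary σ | (b : ι → ℝ) ∈ simplex τ.1} => ⟨b.1.1, b.2⟩)
        (by fun_prop) using 1
    funext b
    exact hg _ τ.2 _ _ b.2

theorem dist_nerveMap_le {σ : Finset ι} (hσ : ¬∃ i, σ = {i}) (h : NerveExtends v w σ)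
    {F : C(simplex σ, Z)} (hF : ExtendsFaces σ (fun τ _ => nerveExtension v w τ) F) {z₀ : Z}
    {ρ : ℝ} (hρ : 0 ≤ ρ) (hFρ : ∀ b, dist (F b) z₀ ≤ ρ) {i : ι} (hi : i ∈ σ)
    (b : simplex σ) :
    dist (nerveMap v w h b) z₀ ≤ 2 * (ρ + ∑ j ∈ σ, w j) + dist (v i) z₀ := by
  classical
  obtain ⟨-, z, r, hr, hmin⟩ := nerveMap_spec hσ h
  have hvertex : nerveMap v w h ⟨_, simplex_mono (Finset.singleton_subset_iff.2 hi)
      (single_mem_simplex i)⟩ = v i := by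
    rw [nerveMap_apply_of_subset h (nerveExtends_singleton i)
      (Finset.singleton_subset_iff.2 hi) _ (single_mem_simplex i), nerveMap_singleton_apply]
  calc dist (nerveMap v w h b) z₀
      ≤ dist (nerveMap v w h b) z + dist z (nerveMap v w h _) + dist (nerveMap v w h _) z₀ :=
        dist_triangle4 _ _ _ _
    _ = dist (nerveMap v w h b) z + dist (nerveMap v w h _) z + dist (v i) z₀ := by
        rw [dist_comm z, hvertex]
    _ ≤ r + r + dist (v i) z₀ := by gcongr <;> exact hr _
    _ ≤ 2 * (ρ + ∑ j ∈ σ, w j) + dist (v i) z₀ := by linarith [hmin F z₀ ρ hF hρ hFρ]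

theorem exists_nerveExtends_of_dist_le (hZ : LocallyContractible Z) (hw : ∀ i, 0 < w i)
    (z₀ : Z) (k : ℕ) {ε : ℝ} (hε : 0 < ε) :
    ∃ δ > 0, ∀ σ : Finset ι, σ.Nonempty → σ.card ≤ k →
      (∀ i ∈ σ, dist (v i) z₀ ≤ δ ∧ w i ≤ δ) →
        ∃ h : NerveExtends v w σ, ∀ b, dist (nerveMap v w h b) z₀ ≤ ε := by
  induction k generalizing ε with
  | zero => exact ⟨1, one_pos, fun σ hσ hk => absurd (Finset.card_pos.2 hσ) (by omega)⟩
  | succ k ih =>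
  -- the faces of `σ` land in a ball so small that local contractibility extends over `σ`
  obtain ⟨ρ, hρ, hext⟩ :=
    hZ.exists_simplex_extension_near (ι := ι) z₀ (by positivity : 0 < ε / 5)
  obtain ⟨δ', hδ', hfaces⟩ := ih (by positivity : 0 < min (ε / 10) (ρ / 2))
  set δ := min δ' (ε / (10 * (k + 1)))
  have hδε : δ ≤ ε / 10 := (min_le_right _ _).trans
    (div_le_div_of_nonneg_left hε.le (by norm_num) (by nlinarith))
  refine ⟨δ, by positivity, fun σ hσ hk hvw => ?_⟩
  by_cases hsingle : ∃ i, σ = {i}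
  · obtain ⟨i, rfl⟩ := hsingle
    refine ⟨nerveExtends_singleton i, fun b => ?_⟩
    rw [nerveMap_singleton_apply]
    linarith [(hvw i (Finset.mem_singleton_self i)).1]
  have hface (τ) (hτσ : τ ⊂ σ) (hτ : τ.Nonempty) := hfaces τ hτ
    (by have := Finset.card_lt_card hτσ; omega) fun i hi =>
      (hvw i (hτσ.subset hi)).imp (le_trans · (min_le_left _ _)) (le_trans · (min_le_left _ _))
  obtain ⟨g, hg⟩ := exists_nerveMap_boundary fun τ hτσ hτ => (hface τ hτσ hτ).1
  have hgρ (b : simplexBoundary σ) : dist (g b) z₀ < ρ := by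
    obtain ⟨h, hh⟩ := hface _ (carrier_ssubset b.2)
      (nonempty_of_mem_simplex (mem_simplex_carrier b.2.1))
    have hb := hh ⟨b, mem_simplex_carrier b.2.1⟩
    rw [← hg _ (carrier_ssubset b.2) h _ (mem_simplex_carrier b.2.1)] at hb
    exact hb.trans_lt ((min_le_right _ _).trans_lt (half_lt_self hρ))
  obtain ⟨F, hFg, hF⟩ := hext σ hσ g hgρ
  have hFfaces : ExtendsFaces σ (fun τ _ => nerveExtension v w τ) F := fun τ hτσ hτ =>
    ⟨_, Option.get_mem (hface τ hτσ hτ).1, fun b hb => (hFg b _).trans (hg τ hτσ _ b hb)⟩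
  have hσgood := nerveExtends_of_extendsFaces hsingle (Finset.sum_pos (fun i _ => hw i) hσ)
    hFfaces (by positivity : 0 ≤ ε / 5) fun b => (hF b).le
  have hslack : ∑ i ∈ σ, w i ≤ ε / 10 := calc
    ∑ i ∈ σ, w i ≤ σ.card • δ := Finset.sum_le_card_nsmul _ _ _ fun i hi => (hvw i hi).2
    _ ≤ (k + 1) * (ε / (10 * (k + 1))) := by
      rw [nsmul_eq_mul]; gcongr; exacts [by exact_mod_cast hk, min_le_right _ _]
    _ = ε / 10 := by field_simp
  obtain ⟨i, hi⟩ := hσ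
  refine ⟨hσgood, fun b => ?_⟩
  linarith [dist_nerveMap_le hsingle hσgood hFfaces (by positivity) (fun b => (hF b).le) hi b,
    (hvw i hi).1]

end Nerve

section Whitney

variable {n : ℕ}

abbrev Cell (n : ℕ) := ℤ × (Fin n → ℤ)

noncomputable def Cell.radius (i : Cell n) : ℝ := 2 ^ i.1

noncomputable def Cell.center (i : Cell n) : Fin n → ℝ := fun j => 2 ^ i.1 * i.2 j

theorem Cell.radius_pos (i : Cell n) : 0 < i.radius := zpow_pos two_pos _

variable (Y : Set (Fin n → ℝ))

def IsWhitneyCell (i : Cell n) : Prop :=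
  4 * i.radius ≤ infDist i.center Y ∧ infDist i.center Y ≤ 20 * i.radius

abbrev WhitneyCell := {i : Cell n // IsWhitneyCell Y i}

variable {Y}

theorem IsWhitneyCell.infDist_bounds {i : Cell n} (hi : IsWhitneyCell Y i) {x : Fin n → ℝ}
    {t : ℝ} (hx : dist x i.center ≤ t * i.radius) :
    (4 - t) * i.radius ≤ infDist x Y ∧ infDist x Y ≤ (20 + t) * i.radius := by
  have h₁ : infDist i.center Y ≤ infDist x Y + dist i.center x := infDist_le_infDist_add_dist
  have h₂ : infDist x Y ≤ infDist i.center Y + dist x i.center := infDist_le_infDist_add_dist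
  rw [dist_comm] at h₁
  constructor <;> linarith [hi.1, hi.2]

theorem IsWhitneyCell.exists_mem_dist_center_le {i : Cell n} (hi : IsWhitneyCell Y i) :
    ∃ y ∈ Y, dist i.center y ≤ 40 * i.radius := by
  have hpos : 0 < infDist i.center Y := by linarith [hi.1, i.radius_pos]
  have hY : Y.Nonempty := nonempty_iff_ne_empty.2 fun h => by simp [h] at hpos
  obtain ⟨y, hy, hdist⟩ :=
    (infDist_lt_iff hY).1 (by linarith : infDist i.center Y < 2 * infDist i.center Y)
  exact ⟨y, hy, by linarith [hi.2]⟩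

variable (Y)

noncomputable def anchor (i : WhitneyCell Y) : Y :=
  ⟨_, i.2.exists_mem_dist_center_le.choose_spec.1⟩

noncomputable def bump (i : WhitneyCell Y) (x : Fin n → ℝ) : ℝ :=
  max 0 (i.1.radius - dist x i.1.center)

variable {Y}

theorem dist_center_anchor_le (i : WhitneyCell Y) :
    dist i.1.center (anchor Y i) ≤ 40 * i.1.radius :=
  i.2.exists_mem_dist_center_le.choose_spec.2

theorem continuous_bump (i : WhitneyCell Y) : Continuous (bump Y i) := by
  unfold bump; fun_prop

theorem bump_nonneg (i : WhitneyCell Y) (x : Fin n → ℝ) : 0 ≤ bump Y i x := le_max_left _ _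

theorem bump_pos_iff {i : WhitneyCell Y} {x : Fin n → ℝ} :
    0 < bump Y i x ↔ dist x i.1.center < i.1.radius := by
  simp [bump]

theorem infDist_bounds_of_bump_pos {i : WhitneyCell Y} {x : Fin n → ℝ} (h : 0 < bump Y i x) :
    3 * i.1.radius ≤ infDist x Y ∧ infDist x Y ≤ 21 * i.1.radius := by
  have := i.2.infDist_bounds (t := 1) (by linarith [bump_pos_iff.1 h])
  constructor <;> linarith [this.1, this.2]

theorem exists_bump_pos {x : Fin n → ℝ} (hx : 0 < infDist x Y) :
    ∃ i : WhitneyCell Y, 0 < bump Y i x := by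
  obtain ⟨m, hm₁, hm₂⟩ := exists_mem_Ico_zpow hx one_lt_two
  let i : Cell n := (m - 3, fun j => round (x j / 2 ^ (m - 3)))
  have hr : (2 : ℝ) ^ m = 8 * i.radius := by
    simp [i, Cell.radius, zpow_sub₀ (two_ne_zero' ℝ)]; ring
  rw [zpow_add_one₀ two_ne_zero, hr] at hm₂
  rw [hr] at hm₁
  have hxi : dist x i.center ≤ 2⁻¹ * i.radius := by
    refine (dist_pi_le_iff (by positivity [i.radius_pos])).2 fun j => ?_
    have hround := abs_sub_round (x j / i.radius)
    rw [Real.dist_eq]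
    calc |x j - i.center j| = i.radius * |x j / i.radius - round (x j / i.radius)| := by
          rw [← abs_of_pos i.radius_pos, ← abs_mul, abs_of_pos i.radius_pos, mul_sub,
            mul_div_cancel₀ _ i.radius_pos.ne']
          rfl
      _ ≤ 2⁻¹ * i.radius := by nlinarith [i.radius_pos]
  have hW : IsWhitneyCell Y i := by
    have h₁ : infDist i.center Y ≤ infDist x Y + dist i.center x := infDist_le_infDist_add_dist
    have h₂ : infDist x Y ≤ infDist i.center Y + dist x i.center := infDist_le_infDist_add_dist
    rw [dist_comm] at h₁
    constructor <;> nlinarith [i.radius_pos]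
  exact ⟨⟨i, hW⟩, bump_pos_iff.2 (hxi.trans_lt (by linarith [i.radius_pos]))⟩

theorem mem_Icc_ceil_of_abs_sub_le {t : ℝ} {a : ℤ} (h : |t - a| ≤ 2) :
    a ∈ Finset.Icc (⌈t⌉ - 2) (⌈t⌉ + 2) := by
  obtain ⟨h₁, h₂⟩ := abs_le.1 h
  have := Int.ceil_lt_add_one t
  have := Int.le_ceil t
  rw [Finset.mem_Icc]
  constructor
  · have : ⌈t⌉ - 3 < a := by exact_mod_cast (by linarith : (⌈t⌉ : ℝ) - 3 < a)
    omega
  · exact_mod_cast (by linarith : (a : ℝ) ≤ ⌈t⌉ + 2)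

/-- Bounded multiplicity of the Whitney cover: the scale of a cell near `x` is comparable to the
distance from `x` to `Y`, which leaves `4` scales and `5 ^ n` lattice points at each scale. -/
theorem exists_finset_cells_near (x : Fin n → ℝ) :
    ∃ s : Finset (Cell n), s.card ≤ 4 * 5 ^ n ∧
      ∀ i, IsWhitneyCell Y i → dist x i.center ≤ 2 * i.radius → i ∈ s := by
  rcases le_or_gt (infDist x Y) 0 with hd | hd
  · refine ⟨∅, by simp, fun i hi hx => ?_⟩
    linarith [(hi.infDist_bounds hx).1, i.radius_pos]
  obtain ⟨m, hm₁, hm₂⟩ := exists_mem_Ico_zpow hd one_lt_two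
  let box (e : ℤ) : Finset (Fin n → ℤ) :=
    Fintype.piFinset fun j => Finset.Icc (⌈x j / 2 ^ e⌉ - 2) (⌈x j / 2 ^ e⌉ + 2)
  refine ⟨(Finset.Icc (m - 4) (m - 1)).biUnion fun e => (box e).image (Prod.mk e), ?_, ?_⟩
  · refine (Finset.card_biUnion_le_card_mul _ _ (5 ^ n) fun e _ =>
      Finset.card_image_le.trans ?_).trans (by simp)
    simp [box, Fintype.card_piFinset, Int.card_Icc,
      show ∀ c : ℤ, c + 2 + 1 - (c - 2) = 5 by omega]
  · rintro ⟨e, a⟩ hi hx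
    have hr : (0 : ℝ) < 2 ^ e := zpow_pos two_pos e
    obtain ⟨hlow, hhigh⟩ := hi.infDist_bounds hx
    simp only [Cell.radius] at hlow hhigh hx
    have he₁ : e < m := by
      rw [← zpow_lt_zpow_iff_right₀ (one_lt_two (α := ℝ)),
        ← mul_lt_mul_iff_of_pos_left two_pos]
      rw [zpow_add_one₀ two_ne_zero] at hm₂
      linarith
    have he₂ : m < e + 5 := by
      rw [← zpow_lt_zpow_iff_right₀ (one_lt_two (α := ℝ)), zpow_add₀ two_ne_zero]
      norm_num
      linarith
    refine Finset.mem_biUnion.2 ⟨e, Finset.mem_Icc.2 ⟨by omega, by omega⟩,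
      Finset.mem_image.2
        ⟨a, Fintype.mem_piFinset.2 fun j => mem_Icc_ceil_of_abs_sub_le ?_, rfl⟩⟩
    have hj : |x j - 2 ^ e * a j| ≤ 2 * 2 ^ e :=
      (Real.dist_eq _ _).symm.trans_le ((dist_le_pi_dist x _ j).trans hx)
    rwa [← mul_div_cancel_left₀ (a j : ℝ) hr.ne', ← sub_div, abs_div, abs_of_pos hr,
      div_le_iff₀ hr]

end Whitney

theorem _root_.isLocallyClosed_of_weaklyLocallyCompactSpace {X : Type*} [TopologicalSpace X]
    [T2Space X] {s : Set X} [WeaklyLocallyCompactSpace s] : IsLocallyClosed s := by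
  refine ((isLocallyClosed_tfae s).out 0 3).2 fun x hx => ?_
  obtain ⟨K, hK, hKx⟩ := exists_compact_mem_nhds (⟨x, hx⟩ : s)
  obtain ⟨u, hu, huK⟩ := (mem_nhds_subtype s _ K).1 hKx
  obtain ⟨U, hUu, hU, hxU⟩ := mem_nhds_iff.1 hu
  refine ⟨U, hxU, hU, (hU.inter_closure).trans ?_⟩
  have hsub : U ∩ s ⊆ (↑) '' K := fun y hy => ⟨⟨y, hy.2⟩, huK (hUu hy.1), rfl⟩
  refine ((hK.image continuous_subtype_val).isClosed.closure_subset_iff.2 hsub).trans ?_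
  rintro _ ⟨y, -, rfl⟩
  exact y.2

section Retraction

variable {n : ℕ} {Y : Set (Fin n → ℝ)}

theorem finite_nearCells (x : Fin n → ℝ) :
    {i : WhitneyCell Y | dist x i.1.center ≤ 2 * i.1.radius}.Finite := by
  obtain ⟨s, -, hs⟩ := exists_finset_cells_near (Y := Y) x
  exact (s.finite_toSet.preimage Subtype.val_injective.injOn).subset fun i hi => hs i.1 i.2 hi

variable (Y) in
noncomputable def nearCells (x : Fin n → ℝ) : Finset (WhitneyCell Y) :=
  (finite_nearCells x).toFinset

theorem mem_nearCells {i : WhitneyCell Y} {x : Fin n → ℝ} :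
    i ∈ nearCells Y x ↔ dist x i.1.center ≤ 2 * i.1.radius :=
  Set.Finite.mem_toFinset _

theorem card_nearCells_le (x : Fin n → ℝ) : (nearCells Y x).card ≤ 4 * 5 ^ n := by
  obtain ⟨s, hcard, hs⟩ := exists_finset_cells_near (Y := Y) x
  exact (Finset.card_le_card_of_injOn Subtype.val (fun i hi => hs i.1 i.2 (mem_nearCells.1 hi))
    Subtype.val_injective.injOn).trans hcard

theorem mem_nearCells_of_bump_pos {i : WhitneyCell Y} {x : Fin n → ℝ} (h : 0 < bump Y i x) :
    i ∈ nearCells Y x :=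
  mem_nearCells.2 (by linarith [bump_pos_iff.1 h, i.1.radius_pos])

variable (Y) in
noncomputable def bary (x : Fin n → ℝ) (i : WhitneyCell Y) : ℝ :=
  bump Y i x / ∑ᶠ j, bump Y j x

theorem bary_eq_div_sum {x : Fin n → ℝ} {s : Finset (WhitneyCell Y)}
    (hs : ∀ i, 0 < bump Y i x → i ∈ s) :
    bary Y x = fun i => bump Y i x / ∑ j ∈ s, bump Y j x := by
  funext i
  rw [bary, finsum_eq_sum_of_support_subset _ fun j hj => hs j ((bump_nonneg j x).lt_of_ne' hj)]

theorem sum_bump_pos {x : Fin n → ℝ} (hx : ∃ i, 0 < bump Y i x) {s : Finset (WhitneyCell Y)}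
    (hs : ∀ i, 0 < bump Y i x → i ∈ s) : 0 < ∑ j ∈ s, bump Y j x := by
  obtain ⟨i, hi⟩ := hx
  exact hi.trans_le (Finset.single_le_sum (fun j _ => bump_nonneg j x) (hs i hi))

theorem bary_mem_simplex {x : Fin n → ℝ} (hx : ∃ i, 0 < bump Y i x)
    {s : Finset (WhitneyCell Y)} (hs : ∀ i, 0 < bump Y i x → i ∈ s) :
    bary Y x ∈ simplex s := by
  have hpos := sum_bump_pos hx hs
  rw [bary_eq_div_sum hs]
  refine ⟨fun j => div_nonneg (bump_nonneg j x) hpos.le, fun j hj => ?_, ?_⟩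
  · dsimp only
    rw [((bump_nonneg j x).eq_of_not_lt fun h => hj (hs j h)).symm, zero_div]
  · rw [← Finset.sum_div, div_self hpos.ne']

variable (Y) in
def nerveDomain : Set (Fin n → ℝ) :=
  {x | (∃ i, 0 < bump Y i x) ∧ NerveExtends (anchor Y) (fun i => i.1.radius) (nearCells Y x)}

open scoped Classical in
variable (Y) in
noncomputable def retraction (x : ↥(Y ∪ nerveDomain Y)) : Y :=
  if h : (x : Fin n → ℝ) ∈ nerveDomain Y then
    nerveMap (anchor Y) (fun i => i.1.radius) h.2
      ⟨bary Y x, bary_mem_simplex h.1 fun _ => mem_nearCells_of_bump_pos⟩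
  else ⟨x, x.2.resolve_right h⟩

theorem infDist_pos_of_mem_nerveDomain {x : Fin n → ℝ} (hx : x ∈ nerveDomain Y) :
    0 < infDist x Y := by
  obtain ⟨i, hi⟩ := hx.1
  linarith [(infDist_bounds_of_bump_pos hi).1, i.1.radius_pos]

theorem notMem_nerveDomain {y : Fin n → ℝ} (hy : y ∈ Y) : y ∉ nerveDomain Y := fun h =>
  (infDist_pos_of_mem_nerveDomain h).ne' (infDist_zero_of_mem hy)

theorem retraction_of_mem {y : Fin n → ℝ} (hy : y ∈ Y) :
    retraction Y ⟨y, Or.inl hy⟩ = ⟨y, hy⟩ :=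
  dif_neg (notMem_nerveDomain hy)

theorem exists_nerveExtends_nearCells (hY : LocallyContractible Y) (y₀ : Y) {ε : ℝ}
    (hε : 0 < ε) :
    ∃ δ > 0, ∀ x : Fin n → ℝ, dist x y₀ < δ → (nearCells Y x).Nonempty →
      ∃ h : NerveExtends (anchor Y) (fun i => i.1.radius) (nearCells Y x),
        ∀ b, dist (nerveMap (anchor Y) (fun i => i.1.radius) h b) y₀ ≤ ε := by
  obtain ⟨δ, hδ, hnerve⟩ :=
    exists_nerveExtends_of_dist_le (v := anchor Y) hY (fun i : WhitneyCell Y => i.1.radius_pos) y₀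
      (4 * 5 ^ n) hε
  refine ⟨δ / 22, by positivity, fun x hx hne =>
    hnerve _ hne (card_nearCells_le x) fun i hi => ?_⟩
  have hix := mem_nearCells.1 hi
  have hr : 2 * i.1.radius ≤ dist x y₀ :=
    (by linarith [(i.2.infDist_bounds hix).1] : 2 * i.1.radius ≤ infDist x Y).trans
      (infDist_le_dist_of_mem y₀.2)
  refine ⟨?_, by linarith⟩
  rw [Subtype.dist_eq]
  calc dist (anchor Y i : Fin n → ℝ) y₀
      ≤ dist ((anchor Y i : Fin n → ℝ)) i.1.center + dist i.1.center x + dist x y₀ :=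
        dist_triangle4 _ _ _ _
    _ ≤ 40 * i.1.radius + 2 * i.1.radius + δ / 22 := by
        have := dist_center_anchor_le i
        rw [dist_comm] at this
        rw [dist_comm i.1.center x]
        linarith
    _ ≤ δ := by linarith

theorem union_nerveDomain_mem_nhdsSet [WeaklyLocallyCompactSpace Y]
    (hY : LocallyContractible Y) : Y ∪ nerveDomain Y ∈ 𝓝ˢ Y := by
  refine mem_nhdsSet_iff_forall.2 fun y hy => ?_
  obtain ⟨δ, hδ, hnerve⟩ := exists_nerveExtends_nearCells hY ⟨y, hy⟩ one_pos
  have hcoborder : coborder Y ∈ 𝓝 y :=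
    isLocallyClosed_of_weaklyLocallyCompactSpace.isOpen_coborder.mem_nhds (subset_coborder hy)
  filter_upwards [hcoborder, ball_mem_nhds y hδ] with z hz hzy
  by_cases hzY : z ∈ Y
  · exact Or.inl hzY
  rw [coborder_eq_union_closure_compl] at hz
  obtain ⟨i, hi⟩ :=
    exists_bump_pos ((infDist_pos_iff_notMem_closure ⟨y, hy⟩).1 (hz.resolve_left hzY))
  exact Or.inr ⟨⟨i, hi⟩, (hnerve z hzy ⟨i, mem_nearCells_of_bump_pos hi⟩).1⟩

theorem continuousAt_retraction_of_mem (hY : LocallyContractible Y)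
    {x : ↥(Y ∪ nerveDomain Y)} (hx : (x : Fin n → ℝ) ∈ Y) :
    ContinuousAt (retraction Y) x := by
  refine Metric.continuousAt_iff.2 fun ε hε => ?_
  obtain ⟨δ, hδ, hnerve⟩ := exists_nerveExtends_nearCells hY ⟨x, hx⟩ (half_pos hε)
  refine ⟨min δ ε, by positivity, fun {z} hz => ?_⟩
  have hzx : dist (z : Fin n → ℝ) x < min δ ε := hz
  rw [show retraction Y x = ⟨x, hx⟩ from dif_neg (notMem_nerveDomain hx), retraction]
  split_ifs with hzV
  · obtain ⟨h, hbound⟩ := hnerve z (hzx.trans_le (min_le_left _ _))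
      ⟨_, mem_nearCells_of_bump_pos hzV.1.choose_spec⟩
    exact (hbound _).trans_lt (half_lt_self hε)
  · exact hzx.trans_le (min_le_right _ _)

theorem mem_nearCells_of_bump_pos_of_dist_lt {x z : Fin n → ℝ}
    (hz : dist z x < infDist x Y / 22) {i : WhitneyCell Y} (hi : 0 < bump Y i z) :
    i ∈ nearCells Y x := by
  have hxz : infDist x Y ≤ infDist z Y + dist x z := infDist_le_infDist_add_dist
  rw [dist_comm] at hxz
  refine mem_nearCells.2 ((dist_triangle x z _).trans ?_)
  rw [dist_comm x z]
  linarith [bump_pos_iff.1 hi, (infDist_bounds_of_bump_pos hi).2]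

theorem continuousAt_retraction_of_mem_nerveDomain {x : ↥(Y ∪ nerveDomain Y)}
    (hx : (x : Fin n → ℝ) ∈ nerveDomain Y) : ContinuousAt (retraction Y) x := by
  set x₀ : Fin n → ℝ := x.1
  set J := nearCells Y x₀
  have hd := infDist_pos_of_mem_nerveDomain hx
  let W : Set ↥(Y ∪ nerveDomain Y) := {z | dist (z : Fin n → ℝ) x₀ < infDist x₀ Y / 22}
  have hW : W ∈ 𝓝 x := (isOpen_lt (continuous_subtype_val.dist continuous_const)
    continuous_const).mem_nhds (by simp [x₀, hd])
  have hdomain (z) (hz : z ∈ W) : (z : Fin n → ℝ) ∈ nerveDomain Y := by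
    refine z.2.resolve_left fun hzY => ?_
    have : infDist x₀ Y ≤ dist x₀ z := infDist_le_dist_of_mem hzY
    rw [dist_comm] at this
    linarith [show dist (z : Fin n → ℝ) x₀ < infDist x₀ Y / 22 from hz]
  have hactive (z) (hz : z ∈ W) (i) (hi : 0 < bump Y i z) : i ∈ J :=
    mem_nearCells_of_bump_pos_of_dist_lt hz hi
  have hbary (z) (hz : z ∈ W) : bary Y z ∈ simplex J :=
    bary_mem_simplex (hdomain z hz).1 (hactive z hz)
  have hfactor (z) (hz : z ∈ W) :
      retraction Y z =
        nerveMap (anchor Y) (fun i => i.1.radius) hx.2 ⟨bary Y z, hbary z hz⟩ := by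
    have hface : bary Y z ∈ simplex (nearCells Y z ∩ J) := bary_mem_simplex (hdomain z hz).1
      fun i hi => Finset.mem_inter.2 ⟨mem_nearCells_of_bump_pos hi, hactive z hz i hi⟩
    have hgood := (hdomain z hz).2.mono Finset.inter_subset_left (nonempty_of_mem_simplex hface)
    rw [retraction, dif_pos (hdomain z hz), nerveMap_apply_of_subset (hdomain z hz).2 hgood
      Finset.inter_subset_left _ hface, ← nerveMap_apply_of_subset hx.2 hgood
      Finset.inter_subset_right _ hface]
  have hcont : ContinuousOn (fun z : ↥(Y ∪ nerveDomain Y) => bary Y z) W := by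
    refine (continuousOn_pi.2 fun i => ((continuous_bump i).comp
      continuous_subtype_val).continuousOn.div ((continuous_finsetSum J fun j _ =>
        (continuous_bump j).comp continuous_subtype_val).continuousOn) fun z hz =>
          (sum_bump_pos (hdomain z hz).1 (hactive z hz)).ne').congr fun z hz => ?_
    exact bary_eq_div_sum (hactive z hz)
  refine ContinuousOn.continuousAt ?_ hW
  rw [continuousOn_iff_continuous_domRestrict]
  exact ((nerveMap (anchor Y) (fun i => i.1.radius) hx.2).continuous.comp
    ((continuousOn_iff_continuous_domRestrict.1 hcont).subtype_mk fun z => hbary z z.2)).congr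
      fun z => (hfactor z z.2).symm

theorem continuous_retraction (hY : LocallyContractible Y) : Continuous (retraction Y) :=
  continuous_iff_continuousAt.2 fun x => x.2.elim (continuousAt_retraction_of_mem hY)
    continuousAt_retraction_of_mem_nerveDomain

end Retraction

end ENR

/-- If `Y ⊆ ℝⁿ` is locally compact and locally contractible then `Y` is a
Euclidean neighborhood retract: there are a neighborhood `U` of `Y` in `ℝⁿ`
and a continuous retraction `r : U → Y` fixing `Y` pointwise. -/
theorem isENR_of_locallyCompact_of_locallyContractible (n : ℕ) (Y : Set (Fin n → ℝ))
    (hYlc : WeaklyLocallyCompactSpace Y) (hYlctr : LocallyContractible Y) :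
    ∃ U : Set (Fin n → ℝ), U ∈ nhdsSet Y ∧ ∃ (hYU : Y ⊆ U) (r : C(U, Y)),
      ∀ (y : Fin n → ℝ) (hy : y ∈ Y), ((r ⟨y, hYU hy⟩ : Y) : Fin n → ℝ) = y := by
  refine ⟨Y ∪ ENR.nerveDomain Y, ENR.union_nerveDomain_mem_nhdsSet hYlctr,
    Set.subset_union_left, ⟨ENR.retraction Y, ENR.continuous_retraction hYlctr⟩,
    fun y hy => ?_⟩
  exact congrArg Subtype.val (ENR.retraction_of_mem hy)
end

section
/- Let X = {(x, y) ∈ ℝ² : x ∈ (0,1], y = sin(1/x)} ∪ {(x, y) ∈ ℝ² : x = 0, y ∈ [−1,1]} be the closed topologist's sine curve, and let f : X → ℝ be the height function f(x, y) = y. Then there exist real numbers u < v (for instance u = 0 and v = 1/2) such that the image of the homomorphism H₀(X_{f ≤ u}) → H₀(X_{f ≤ v}) induced in singular homology (with integer coefficients) by the inclusion of sublevel sets X_{f ≤ u} ↪ X_{f ≤ v} is NOT a finitely generated abelian group; i.e. the 0-th rank invariant of (X, f) is not finite. -/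
/-!
Sending the class of a point to its path component gives a homomorphism
`H₀(Y) → ℤ[π₀ Y]`, natural in `Y`. The troughs `(1 / (3π/2 + 2πn), -1)` of the sine curve lie
in `X_{f ≤ 0}`, and they lie in pairwise distinct path components of `X_{f ≤ 1/2}`: between
two of them the curve climbs to height `1`, so the abscissa of a path joining them would have
to pass through a point of height `1`. Hence the image of `H₀(X_{f ≤ 0}) → H₀(X_{f ≤ 1/2})`
maps onto a subgroup of a free abelian group containing infinitely many basis elements, and
such a subgroup is not finitely generated.
-/

open CategoryTheory

/-- The closed topologist's sine curve:
`{(x, sin(1/x)) : x ∈ (0,1]} ∪ ({0} × [-1,1])`. -/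
def closedTopologistSineCurve : Set (ℝ × ℝ) :=
  {p | p.1 ∈ Set.Ioc (0 : ℝ) 1 ∧ p.2 = Real.sin (1 / p.1)} ∪
    {p | p.1 = 0 ∧ p.2 ∈ Set.Icc (-1 : ℝ) 1}


theorem FreeAbelianGroup.linearIndependent_of (α : Type*) :
    LinearIndependent ℤ (of : α → FreeAbelianGroup α) := by
  simpa [FreeAbelianGroup.basis] using (FreeAbelianGroup.basis α).linearIndependent

theorem FreeAbelianGroup.not_fg_of_infinite {α : Type*} {s : Set α} (hs : s.Infinite)
    {S : AddSubgroup (FreeAbelianGroup α)} (hS : ∀ a ∈ s, of a ∈ S) : ¬ S.FG := by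
  intro hfg
  have : IsNoetherian ℤ S.toIntSubmodule :=
    isNoetherian_of_fg_of_noetherian _ ((Submodule.fg_iff_addSubgroup_fg _).2 hfg)
  have hli : LinearIndependent ℤ (fun a : s => (⟨of a, hS a a.2⟩ : S.toIntSubmodule)) :=
    LinearIndependent.of_comp S.toIntSubmodule.subtype
      ((linearIndependent_of α).comp _ Subtype.val_injective)
  exact hs (Set.finite_coe_iff.1 hli.finite_of_isNoetherian)

theorem AddSubgroup.FG.map {G H : Type*} [AddGroup G] [AddGroup H] {S : AddSubgroup G}
    (hS : S.FG) (f : G →+ H) : (S.map f).FG :=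
  (fg_iff_addSubmonoid_fg _).2 (((fg_iff_addSubmonoid_fg _).1 hS).map f)

namespace ChainComplex

open HomologicalComplex

variable {C : Type*} [Category C] [Limits.HasZeroMorphisms C]
  {K L : ChainComplex C ℕ} [K.HasHomology 0] [L.HasHomology 0]

variable (K) in
noncomputable def toHomology₀ : K.X 0 ⟶ K.homology 0 :=
  K.cycles₀Iso.inv ≫ K.homologyπ 0

lemma toHomology₀_naturality (φ : K ⟶ L) :
    K.toHomology₀ ≫ homologyMap φ 0 = φ.f 0 ≫ L.toHomology₀ := by
  simp [toHomology₀, ← cancel_mono (L.homologyι 0)]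

variable (K) in
noncomputable def homologyDesc₀ {G : C} (ψ : K.X 0 ⟶ G) (hψ : K.d 1 0 ≫ ψ = 0) :
    K.homology 0 ⟶ G :=
  K.homologyι 0 ≫ K.descOpcycles ψ 1 (by simp) hψ

lemma toHomology₀_homologyDesc₀ {G : C} (ψ : K.X 0 ⟶ G) (hψ : K.d 1 0 ≫ ψ = 0) :
    K.toHomology₀ ≫ K.homologyDesc₀ ψ hψ = ψ := by
  simp [toHomology₀, homologyDesc₀]

end ChainComplex

section SingularHomologyZero

open HomologicalComplex TopCat

noncomputable def singularHomologyZeroIso (Y : TopCat.{0}) :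
    (singularHomology 0).obj Y ≅ (singularChainComplex.obj Y).homology 0 :=
  (singularChainComplex.obj Y).extendHomologyIso ComplexShape.embeddingDownNat rfl

lemma singularHomologyZeroIso_inv_naturality {A B : TopCat.{0}} (g : A ⟶ B) :
    (singularHomologyZeroIso A).inv ≫ (singularHomology 0).map g =
      homologyMap (singularChainComplex.map g) 0 ≫ (singularHomologyZeroIso B).inv := by
  rw [Iso.eq_comp_inv, Category.assoc, Iso.inv_comp_eq]
  exact extendHomologyIso_hom_naturality (singularChainComplex.map g) _ _

noncomputable def singularZeroChain {Y : TopCat.{0}} (y : Y) : (singularChainComplex.obj Y).X 0 :=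
  FreeAbelianGroup.of (toSSetObj₀Equiv.symm y)

lemma singularChainComplex_map_f_zero_singularZeroChain {A B : TopCat.{0}} (g : A ⟶ B) (a : A) :
    (singularChainComplex.map g).f 0 (singularZeroChain a) = singularZeroChain (g a) :=
  FreeAbelianGroup.map_of _ _

noncomputable def singularHomologyZeroClass {Y : TopCat.{0}} (y : Y) : (singularHomology 0).obj Y :=
  (singularHomologyZeroIso Y).inv ((singularChainComplex.obj Y).toHomology₀ (singularZeroChain y))

noncomputable def singularZeroChainsToComponents (Y : TopCat.{0}) :
    (singularChainComplex.obj Y).X 0 ⟶ AddCommGrpCat.free.obj (ZerothHomotopy Y) :=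
  AddCommGrpCat.free.map (TypeCat.ofHom SSet.π₀.mk) ≫
    AddCommGrpCat.free.map (TypeCat.ofHom zerothHomotopyEquiv.symm)

lemma singularZeroChainsToComponents_singularZeroChain {Y : TopCat.{0}} (y : Y) :
    singularZeroChainsToComponents Y (singularZeroChain y) = .of (ZerothHomotopy.mk y) := by
  change FreeAbelianGroup.map _ (FreeAbelianGroup.map _ (.of _)) = _
  simp

-- `d σ = δ₀ σ - δ₁ σ`, and the two faces of a singular `1`-simplex are joined by a path.
lemma d_one_zero_comp_singularZeroChainsToComponents (Y : TopCat.{0}) :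
    (singularChainComplex.obj Y).d 1 0 ≫ singularZeroChainsToComponents Y = 0 := by
  have h := AddCommGrpCat.free.congr_map (toSSet.obj Y).coforkπ₀.condition
  simp only [Functor.map_comp] at h
  simp only [singularChainComplex, Functor.comp_obj, singularZeroChainsToComponents,
    AlgebraicTopology.alternatingFaceMapComplex_obj_d,
    AlgebraicTopology.AlternatingFaceMapComplex.objD]
  rw [Fin.sum_univ_two]
  simp only [Fin.val_zero, Fin.val_one, pow_zero, pow_one, one_smul, neg_smul]
  erw [Preadditive.add_comp, Preadditive.neg_comp, reassoc_of% h, add_neg_cancel]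
  rfl

noncomputable def singularHomologyZeroToComponents (Y : TopCat.{0}) :
    (singularHomology 0).obj Y ⟶ AddCommGrpCat.free.obj (ZerothHomotopy Y) :=
  (singularHomologyZeroIso Y).hom ≫
    (singularChainComplex.obj Y).homologyDesc₀ _
      (d_one_zero_comp_singularZeroChainsToComponents Y)

lemma singularHomologyZeroToComponents_class {Y : TopCat.{0}} (y : Y) :
    singularHomologyZeroToComponents Y (singularHomologyZeroClass y) =
      .of (ZerothHomotopy.mk y) := by
  have h : (singularChainComplex.obj Y).toHomology₀ ≫ (singularHomologyZeroIso Y).inv ≫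
      singularHomologyZeroToComponents Y = singularZeroChainsToComponents Y := by
    rw [singularHomologyZeroToComponents, Iso.inv_hom_id_assoc,
      ChainComplex.toHomology₀_homologyDesc₀]
  have := ConcreteCategory.congr_hom h (singularZeroChain y)
  simp only [ConcreteCategory.comp_apply] at this
  rw [singularHomologyZeroClass, this, singularZeroChainsToComponents_singularZeroChain]

lemma singularHomology_zero_map_class {A B : TopCat.{0}} (g : A ⟶ B) (a : A) :
    (singularHomology 0).map g (singularHomologyZeroClass a) = singularHomologyZeroClass (g a) := by
  have h : (singularChainComplex.obj A).toHomology₀ ≫ (singularHomologyZeroIso A).inv ≫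
      (singularHomology 0).map g = (singularChainComplex.map g).f 0 ≫
        (singularChainComplex.obj B).toHomology₀ ≫ (singularHomologyZeroIso B).inv := by
    rw [singularHomologyZeroIso_inv_naturality, ← Category.assoc,
      ChainComplex.toHomology₀_naturality, Category.assoc]
  have := ConcreteCategory.congr_hom h (singularZeroChain a)
  simp only [ConcreteCategory.comp_apply] at this
  rw [singularHomologyZeroClass, this, singularChainComplex_map_f_zero_singularZeroChain]
  rfl

end SingularHomologyZero

theorem singularHomology_zero_map_range_not_fg {A B : TopCat.{0}} (g : A ⟶ B)
    (h : (Set.range fun a => ZerothHomotopy.mk (g a)).Infinite) :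
    ¬ (AddMonoidHom.range ((singularHomology 0).map g).hom).FG := fun hfg => by
  refine FreeAbelianGroup.not_fg_of_infinite h ?_ (hfg.map (singularHomologyZeroToComponents B).hom)
  rintro _ ⟨a, rfl⟩
  refine ⟨_, ⟨singularHomologyZeroClass a, rfl⟩, ?_⟩
  rw [singularHomology_zero_map_class]
  exact singularHomologyZeroToComponents_class (g a)

section SineCurve

open Real

lemma snd_eq_sin_of_mem_closedTopologistSineCurve {p : ℝ × ℝ} (hp : p ∈ closedTopologistSineCurve)
    (hp₁ : p.1 ≠ 0) : p.2 = sin (1 / p.1) :=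
  hp.elim (·.2) fun h => absurd h.1 hp₁

lemma not_joined_sublevel_of_sin_eq_one {v : ℝ} (hv : v < 1) {c : ℝ} (hc : 0 < c)
    (hsin : sin (1 / c) = 1) {p q : {p : closedTopologistSineCurve | (p : ℝ × ℝ).2 ≤ v}}
    (hpc : (p.1 : ℝ × ℝ).1 < c) (hcq : c < (q.1 : ℝ × ℝ).1) : ¬ Joined p q := by
  rintro ⟨γ⟩
  have hx : Continuous fun z : {p : closedTopologistSineCurve | (p : ℝ × ℝ).2 ≤ v} =>
      (z.1 : ℝ × ℝ).1 := by fun_prop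
  obtain ⟨t, ht⟩ := (isPreconnected_range (hx.comp γ.continuous)).Icc_subset
    ⟨0, by simp⟩ ⟨1, by simp⟩ ⟨hpc.le, hcq.le⟩
  have hγt := (γ t).2
  simp only [Function.comp_apply] at ht
  rw [Set.mem_ofPred_eq, snd_eq_sin_of_mem_closedTopologistSineCurve (γ t).1.2 (ht ▸ hc.ne'), ht,
    hsin] at hγt
  linarith

noncomputable def sineCurveTrough (n : ℕ) : closedTopologistSineCurve :=
  ⟨(1 / (π / 2 + π + n * (2 * π)), -1), by
    have hpos : 1 ≤ π / 2 + π + n * (2 * π) := by nlinarith [pi_gt_three]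
    refine Or.inl ⟨⟨by positivity, (div_le_one (by linarith)).2 hpos⟩, ?_⟩
    simp only [one_div_one_div, sin_add_nat_mul_two_pi, sin_add_pi, sin_pi_div_two]⟩

lemma sineCurveTrough_not_joined {v : ℝ} (hv : v < 1) {m n : ℕ} (hmn : m < n)
    (hm : (sineCurveTrough m : ℝ × ℝ).2 ≤ v) (hn : (sineCurveTrough n : ℝ × ℝ).2 ≤ v) :
    ¬ Joined (⟨sineCurveTrough n, hn⟩ : {p : closedTopologistSineCurve | (p : ℝ × ℝ).2 ≤ v})
      ⟨sineCurveTrough m, hm⟩ := by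
  have hmn' : (m : ℝ) + 1 ≤ n := by exact_mod_cast hmn
  refine not_joined_sublevel_of_sin_eq_one hv (c := 1 / (π / 2 + (m + 1 : ℕ) * (2 * π)))
    (by positivity) (by rw [one_div_one_div, sin_add_nat_mul_two_pi, sin_pi_div_two]) ?_ ?_
  · exact one_div_lt_one_div_of_lt (by positivity) (by push_cast; nlinarith [pi_pos])
  · exact one_div_lt_one_div_of_lt (by positivity) (by push_cast; nlinarith [pi_pos])

theorem closedTopologistSineCurve_sublevel_components_infinite {u v : ℝ} (hu : -1 ≤ u) (huv : u ≤ v)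
    (hv : v < 1) :
    (Set.range fun p : {p : closedTopologistSineCurve | (p : ℝ × ℝ).2 ≤ u} =>
      ZerothHomotopy.mk (Set.inclusion (fun _ hq => le_trans hq huv) p :
        {p : closedTopologistSineCurve | (p : ℝ × ℝ).2 ≤ v})).Infinite := by
  have hmem (n : ℕ) : (sineCurveTrough n : ℝ × ℝ).2 ≤ u := hu
  refine Set.infinite_of_injective_forall_mem (f := fun n => _) ?_ fun n => ⟨⟨_, hmem n⟩, rfl⟩
  intro m n hmn
  have hj : Joined _ _ := Quotient.exact hmn
  rcases lt_trichotomy m n with h | h | h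
  · exact absurd hj.symm (sineCurveTrough_not_joined hv h _ _)
  · exact h
  · exact absurd hj (sineCurveTrough_not_joined hv h _ _)

end SineCurve

/-- For the closed topologist's sine curve filtered by the height function
`f(x,y) = y`, there are `u < v` such that the image of
`H₀(X_{f ≤ u}) → H₀(X_{f ≤ v})` induced by the inclusion of sublevel sets is
not finitely generated: the 0-th rank invariant is not finite. -/
theorem closedTopologistSineCurve_rank_invariant_not_finite :
    ∃ (u v : ℝ) (huv : u < v),
      ¬ (AddMonoidHom.range ((singularHomology 0).map
        (show TopCat.of {p : closedTopologistSineCurve | (p : ℝ × ℝ).2 ≤ u} ⟶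
              TopCat.of {p : closedTopologistSineCurve | (p : ℝ × ℝ).2 ≤ v} from
          (TopCat.ofHom ⟨Set.inclusion (fun p hp => le_trans hp huv.le),
           continuous_inclusion _⟩))).hom).FG :=
  ⟨0, 1 / 2, by norm_num, singularHomology_zero_map_range_not_fg _
    (closedTopologistSineCurve_sublevel_components_infinite (by norm_num) (by norm_num)
      (by norm_num))⟩
end
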